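/- arXiv:2304.13611 — 4 statements merged into one kernel-verified Lean document; each statement's English description precedes it below -/
import Mathlib

section
/- Let z, ξ ∈ ℝ^N with |z| ≤ 1. If z·ξ = √(1+|ξ|²) − √(1−|z|²), then z = ξ/√(1+|ξ|²). In particular the equation z·ξ = √(1+|ξ|²) − √(1−|z|²) determines z uniquely in terms of ξ. -/
open scoped RealInnerProductSpace

/-- Let `z, ξ ∈ ℝ^N` with `|z| ≤ 1`. If `z·ξ = √(1+|ξ|²) − √(1−|z|²)`, then
`z = ξ/√(1+|ξ|²)`: the identity determines `z` uniquely in terms of `ξ`. -/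
theorem flux_field_uniqueness (N : ℕ) (hN : 1 ≤ N) (z ξ : EuclideanSpace ℝ (Fin N))
    (hz : ‖z‖ ≤ 1)
    (heq : ⟪z, ξ⟫ = Real.sqrt (1 + ‖ξ‖ ^ 2) - Real.sqrt (1 - ‖z‖ ^ 2)) :
    z = (Real.sqrt (1 + ‖ξ‖ ^ 2))⁻¹ • ξ := by
  have hξ : (0:ℝ) ≤ 1 + ‖ξ‖ ^ 2 := by positivity
  set s := Real.sqrt (1 + ‖ξ‖ ^ 2) with hsdef
  have hs2 : s ^ 2 = 1 + ‖ξ‖ ^ 2 := Real.sq_sqrt hξ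
  have hsnn : 0 ≤ s := Real.sqrt_nonneg _
  have hspos : 0 < s := by nlinarith [sq_nonneg ‖ξ‖]
  have hzsq : ‖z‖ ^ 2 ≤ 1 := by nlinarith [norm_nonneg z]
  set t := Real.sqrt (1 - ‖z‖ ^ 2) with htdef
  have ht2 : t ^ 2 = 1 - ‖z‖ ^ 2 := Real.sq_sqrt (by linarith)
  have htnn : 0 ≤ t := Real.sqrt_nonneg _
  have hinv : s * s⁻¹ = 1 := mul_inv_cancel₀ (ne_of_gt hspos)
  have hexp : ‖z - s⁻¹ • ξ‖ ^ 2
      = ‖z‖ ^ 2 - 2 * s⁻¹ * ⟪z, ξ⟫ + s⁻¹ ^ 2 * ‖ξ‖ ^ 2 := by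
    rw [@norm_sub_sq_real, real_inner_smul_right, norm_smul]
    rw [Real.norm_eq_abs, abs_of_pos (inv_pos.mpr hspos)]
    ring
  have hzero : ‖z - s⁻¹ • ξ‖ ^ 2 = 0 := by
    have h1 : ‖z - s⁻¹ • ξ‖ ^ 2 = -((t - s⁻¹) ^ 2) := by
      rw [hexp, heq]
      field_simp
      linear_combination (-1) * hs2 + s^2 * ht2
    nlinarith [sq_nonneg ‖z - s⁻¹ • ξ‖, sq_nonneg (t - s⁻¹)]
  have h := norm_eq_zero.mp (pow_eq_zero_iff (two_ne_zero) |>.mp hzero)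
  rwa [sub_eq_zero] at h
end

section
/- Let N ≥ 3 be an integer and 0 < α < N−1. Define the vector field F on ℝ^N∖{0} by F(x) = −α |x|^{−α−2} (1 + α² |x|^{−2α−2})^{−1/2} x, which equals ∇u_α(x)/√(1+|∇u_α(x)|²) for u_α(x) = |x|^{−α} − 1. Then F is differentiable at every x ≠ 0 and its divergence satisfies −div F(x) = (N−1) g_α(|x|)/|x|, where g_α(r) = α r^{−α−1} (α² r^{−2α−2} − (α+2−N)/(N−1)) / (1 + α² r^{−2α−2})^{3/2}. -/
/-- The profile `g_α` of the datum of the extremal example. -/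
noncomputable def gAlpha (N : ℕ) (α r : ℝ) : ℝ :=
  α * r ^ (-α - 1) * (α ^ 2 * r ^ (-2 * α - 2) - (α + 2 - N) / ((N : ℝ) - 1)) /
    (1 + α ^ 2 * r ^ (-2 * α - 2)) ^ ((3 : ℝ) / 2)

/-- The flux field `F = ∇u_α/√(1+|∇u_α|²)` of the extremal example `u_α(x) = |x|^{−α} − 1`. -/
noncomputable def fluxField (N : ℕ) (α : ℝ) (x : EuclideanSpace ℝ (Fin N)) :
    EuclideanSpace ℝ (Fin N) :=
  (-α * ‖x‖ ^ (-α - 2) * (1 + α ^ 2 * ‖x‖ ^ (-2 * α - 2)) ^ (-(1 : ℝ) / 2)) • x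

namespace RadialExample

noncomputable def phi (α r : ℝ) : ℝ :=
  -α * r ^ (-α - 2) * (1 + α ^ 2 * r ^ (-2 * α - 2)) ^ (-(1 : ℝ) / 2)

noncomputable def phi' (α r : ℝ) : ℝ :=
  -α * ((-α - 2) * r ^ (-α - 2 - 1)) * (1 + α ^ 2 * r ^ (-2 * α - 2)) ^ (-(1 : ℝ) / 2)
  + -α * r ^ (-α - 2) * (α ^ 2 * ((-2 * α - 2) * r ^ (-2 * α - 2 - 1)) * (-(1 : ℝ) / 2)
      * (1 + α ^ 2 * r ^ (-2 * α - 2)) ^ (-(1 : ℝ) / 2 - 1))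

lemma hasDerivAt_phi (α : ℝ) {r : ℝ} (hr : 0 < r) :
    HasDerivAt (phi α) (phi' α r) r := by
  have hb : (0:ℝ) < 1 + α ^ 2 * r ^ (-2 * α - 2) := by positivity
  have hA : HasDerivAt (fun t : ℝ => -α * t ^ (-α - 2))
      (-α * ((-α - 2) * r ^ (-α - 2 - 1))) r :=
    (Real.hasDerivAt_rpow_const (Or.inl hr.ne')).const_mul (-α)
  have hB : HasDerivAt (fun t : ℝ => 1 + α ^ 2 * t ^ (-2 * α - 2))
      (α ^ 2 * ((-2 * α - 2) * r ^ (-2 * α - 2 - 1))) r :=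
    ((Real.hasDerivAt_rpow_const (Or.inl hr.ne')).const_mul (α ^ 2)).const_add 1
  have hC := hB.rpow_const (p := -(1:ℝ)/2) (Or.inl hb.ne')
  exact hA.mul hC

lemma key_algebra (N : ℕ) (hN : 3 ≤ N) (α r : ℝ) (hα : 0 < α) (hr : 0 < r) :
    -((N : ℝ) * phi α r + r * phi' α r) = ((N : ℝ) - 1) * gAlpha N α r / r := by
  have hb : (0:ℝ) < 1 + α ^ 2 * r ^ (-2 * α - 2) := by positivity
  have hN1 : ((N : ℝ) - 1) ≠ 0 := by
    have : (3:ℝ) ≤ (N:ℝ) := by exact_mod_cast hN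
    nlinarith
  have e1 : r ^ (-α - 2 - 1) = r ^ (-α - 2) / r := by
    rw [show -α - 2 - 1 = (-α - 2) - 1 by ring, Real.rpow_sub hr, Real.rpow_one]
  have e2 : r ^ (-2 * α - 2 - 1) = r ^ (-2 * α - 2) / r := by
    rw [show -2 * α - 2 - 1 = (-2 * α - 2) - 1 by ring, Real.rpow_sub hr, Real.rpow_one]
  have e5 : r ^ (-α - 1) = r ^ (-α - 2) * r := by
    rw [show -α - 1 = (-α - 2) + 1 by ring, Real.rpow_add hr, Real.rpow_one]
  set b : ℝ := 1 + α ^ 2 * r ^ (-2 * α - 2) with hbdef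
  have e3 : b ^ (-(1:ℝ)/2) = b / b ^ ((3:ℝ)/2) := by
    rw [show -(1:ℝ)/2 = 1 - (3:ℝ)/2 by norm_num, Real.rpow_sub hb, Real.rpow_one]
  have e4 : b ^ (-(1:ℝ)/2 - 1) = 1 / b ^ ((3:ℝ)/2) := by
    rw [show -(1:ℝ)/2 - 1 = -((3:ℝ)/2) by norm_num, Real.rpow_neg hb.le, one_div]
  have hc : (0:ℝ) < b ^ ((3:ℝ)/2) := Real.rpow_pos_of_pos hb _
  rw [phi, phi', gAlpha, e1, e2, e5, ← hbdef, e3, e4]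
  field_simp
  rw [hbdef]; ring

lemma hasFDerivAt_norm' {N : ℕ} (x : EuclideanSpace ℝ (Fin N)) (hx : x ≠ 0) :
    HasFDerivAt (fun y : EuclideanSpace ℝ (Fin N) => ‖y‖) (‖x‖⁻¹ • innerSL ℝ x) x := by
  have hxs : (0:ℝ) < ‖x‖ := norm_pos_iff.mpr hx
  have h1 : HasFDerivAt (fun y : EuclideanSpace ℝ (Fin N) => ‖y‖ ^ 2)
      (2 • (innerSL ℝ x)) x := (hasStrictFDerivAt_norm_sq x).hasFDerivAt
  have h2 : HasDerivAt Real.sqrt (1 / (2 * Real.sqrt (‖x‖ ^ 2))) (‖x‖ ^ 2) :=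
    Real.hasDerivAt_sqrt (by positivity)
  have h3 := h2.comp_hasFDerivAt x h1
  have hfun : (Real.sqrt ∘ fun y : EuclideanSpace ℝ (Fin N) => ‖y‖ ^ 2)
      = fun y : EuclideanSpace ℝ (Fin N) => ‖y‖ := by
    funext y; simp [Function.comp, Real.sqrt_sq (norm_nonneg y)]
  rw [hfun] at h3
  refine h3.congr_fderiv ?_
  rw [Real.sqrt_sq hxs.le]
  ext v
  simp [smul_smul]
  field_simp

lemma hasFDerivAt_fluxField {N : ℕ} (α : ℝ) (x : EuclideanSpace ℝ (Fin N)) (hx : x ≠ 0) :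
    HasFDerivAt (fluxField N α)
      (phi α ‖x‖ • ContinuousLinearMap.id ℝ (EuclideanSpace ℝ (Fin N)) +
        ((phi' α ‖x‖ • (‖x‖⁻¹ • innerSL ℝ x))).smulRight x) x := by
  have hxs : (0:ℝ) < ‖x‖ := norm_pos_iff.mpr hx
  have hphi := (hasDerivAt_phi α hxs).comp_hasFDerivAt x (hasFDerivAt_norm' x hx)
  have hF := hphi.smul (hasFDerivAt_id x)
  exact hF

end RadialExample

open RadialExample

/-- For `N ≥ 3` and `0 < α < N−1`, the field `F(x) = −α|x|^{−α−2}(1+α²|x|^{−2α−2})^{−1/2} x`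
equals `∇u_α/√(1+|∇u_α|²)` for `u_α(x) = |x|^{−α} − 1`, is differentiable at every `x ≠ 0`,
and satisfies `−div F(x) = (N−1) g_α(|x|)/|x|`. -/
theorem radial_example_divergence (N : ℕ) (hN : 3 ≤ N) (α : ℝ) (hα : 0 < α)
    (hαN : α < (N : ℝ) - 1) (x : EuclideanSpace ℝ (Fin N)) (hx : x ≠ 0) :
    fluxField N α x =
      (Real.sqrt (1 + ‖(-α * ‖x‖ ^ (-α - 2)) • x‖ ^ 2))⁻¹ • ((-α * ‖x‖ ^ (-α - 2)) • x) ∧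
    DifferentiableAt ℝ (fluxField N α) x ∧
    -(∑ i, fderiv ℝ (fluxField N α) x (EuclideanSpace.single i 1) i) =
      ((N : ℝ) - 1) * gAlpha N α ‖x‖ / ‖x‖ := by
  have hxs : (0:ℝ) < ‖x‖ := norm_pos_iff.mpr hx
  set r : ℝ := ‖x‖ with hr
  have hb : (0:ℝ) < 1 + α ^ 2 * r ^ (-2 * α - 2) := by positivity
  have hF := hasFDerivAt_fluxField (N := N) α x hx
  refine ⟨?_, hF.differentiableAt, ?_⟩
  · -- part 1
    have hns : ‖(-α * r ^ (-α - 2)) • x‖ ^ 2 = α ^ 2 * r ^ (-2 * α - 2) := by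
      rw [norm_smul, mul_pow, Real.norm_eq_abs, sq_abs, ← hr]
      rw [mul_pow, neg_pow, ← Real.rpow_natCast (r ^ (-α - 2)) 2,
        ← Real.rpow_natCast r 2, ← Real.rpow_mul hxs.le]
      have hcomb : r ^ ((-α - 2) * ((2:ℕ):ℝ)) * r ^ ((2:ℕ):ℝ) = r ^ (-2 * α - 2) := by
        rw [← Real.rpow_add hxs]; congr 1; push_cast; ring
      rw [mul_assoc, hcomb]
      ring
    rw [hns]
    have hsq : Real.sqrt (1 + α ^ 2 * r ^ (-2 * α - 2))
        = (1 + α ^ 2 * r ^ (-2 * α - 2)) ^ ((1:ℝ)/2) := Real.sqrt_eq_rpow _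
    rw [hsq]
    rw [← Real.rpow_neg hb.le]
    rw [fluxField, smul_smul]
    congr 1
    rw [show -((1:ℝ)/2) = -(1:ℝ)/2 by ring]
    ring
  · -- part 3
    rw [hF.fderiv]
    have hcoord : ∀ i, (phi α r • ContinuousLinearMap.id ℝ (EuclideanSpace ℝ (Fin N)) +
        ((phi' α r • (r⁻¹ • innerSL ℝ x))).smulRight x) (EuclideanSpace.single i 1) i
        = phi α r + phi' α r * r⁻¹ * (x i * x i) := by
      intro i
      simp [ContinuousLinearMap.smulRight_apply, EuclideanSpace.single_apply,
        real_inner_comm, EuclideanSpace.inner_single_left, EuclideanSpace.inner_single_right]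
      ring
    rw [Finset.sum_congr rfl (fun i _ => hcoord i)]
    rw [Finset.sum_add_distrib, Finset.sum_const, ← Finset.mul_sum]
    have hsum : ∑ i, x i * x i = r ^ 2 := by
      have := real_inner_self_eq_norm_sq x
      rw [PiLp.inner_apply] at this
      simpa [RCLike.inner_apply, conj_trivial, ← sq, ← hr] using this
    rw [hsum]
    have : phi' α r * r⁻¹ * r ^ 2 = r * phi' α r := by
      field_simp
    rw [this]
    have := key_algebra N hN α r hα hxs
    simp only [Finset.card_univ, Fintype.card_fin, nsmul_eq_mul]
    linarith [this]
end

section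
/- Let N ≥ 3 be an integer and 0 < α < N−1. Then |g_α(r)| ≤ 1 for every r with 0 < r < 1, where g_α(r) = α r^{−α−1} (α² r^{−2α−2} − (α+2−N)/(N−1)) / (1 + α² r^{−2α−2})^{3/2}. -/
/-!
With `u = α r^{-α-1}` and `c = (α + 2 - N)/(N - 1)` one has
`g_α(r) = u (u² - c) / (1 + u²)^{3/2}`, and `c ∈ [-1, 1]` because `-1 ≤ α ≤ 2N - 3`.
The bound then follows from `|u| ≤ √(1 + u²)` and `|u² - c| ≤ 1 + u²`.
-/

open Real

lemma one_add_sq_rpow_three_halves (u : ℝ) :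
    (1 + u ^ 2) ^ ((3 : ℝ) / 2) = √(1 + u ^ 2) * (1 + u ^ 2) := by
  rw [show (3 : ℝ) / 2 = 1 / 2 + 1 by norm_num, rpow_add (by positivity), rpow_one,
    ← sqrt_eq_rpow]

lemma abs_mul_sq_sub_le_one_add_sq_rpow (u c : ℝ) (hc : |c| ≤ 1) :
    |u * (u ^ 2 - c)| ≤ (1 + u ^ 2) ^ ((3 : ℝ) / 2) := by
  have hu : |u| ≤ √(1 + u ^ 2) := abs_le_sqrt (by linarith)
  have hsub : |u ^ 2 - c| ≤ 1 + u ^ 2 := by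
    rw [abs_le] at hc ⊢
    constructor <;> nlinarith [sq_nonneg u]
  rw [abs_mul, one_add_sq_rpow_three_halves]
  exact mul_le_mul hu hsub (abs_nonneg _) (sqrt_nonneg _)

lemma abs_div_one_add_sq_rpow_le_one (u c : ℝ) (hc : |c| ≤ 1) :
    |u * (u ^ 2 - c) / (1 + u ^ 2) ^ ((3 : ℝ) / 2)| ≤ 1 := by
  have hpos : 0 < (1 + u ^ 2) ^ ((3 : ℝ) / 2) := by positivity
  rw [abs_div, abs_of_pos hpos, div_le_one hpos]
  exact abs_mul_sq_sub_le_one_add_sq_rpow u c hc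

lemma gAlpha_eq_of_pos (N : ℕ) (α : ℝ) {r : ℝ} (hr : 0 < r) :
    gAlpha N α r =
      α * r ^ (-α - 1) * ((α * r ^ (-α - 1)) ^ 2 - (α + 2 - N) / ((N : ℝ) - 1)) /
        (1 + (α * r ^ (-α - 1)) ^ 2) ^ ((3 : ℝ) / 2) := by
  have hsq : r ^ (-2 * α - 2) = (r ^ (-α - 1)) ^ 2 := by
    rw [show -2 * α - 2 = (-α - 1) * 2 by ring, rpow_mul hr.le, rpow_two]
  rw [gAlpha, hsq, mul_pow]

lemma abs_add_two_sub_div_sub_one_le_one {N α : ℝ} (hN : 1 < N) (hα₀ : -1 ≤ α)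
    (hα₁ : α ≤ 2 * N - 3) :
    |(α + 2 - N) / (N - 1)| ≤ 1 := by
  have hpos : 0 < N - 1 := by linarith
  rw [abs_div, abs_of_pos hpos, div_le_one hpos, abs_le]
  constructor <;> linarith

theorem gAlpha_abs_le_one_general (N : ℕ) (hN : 3 ≤ N) (α : ℝ) (hα : 0 < α)
    (hαN : α < (N : ℝ) - 1) (r : ℝ) (hr0 : 0 < r) :
    |gAlpha N α r| ≤ 1 := by
  have hN' : (3 : ℝ) ≤ N := by exact_mod_cast hN
  rw [gAlpha_eq_of_pos N α hr0]
  exact abs_div_one_add_sq_rpow_le_one _ _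
    (abs_add_two_sub_div_sub_one_le_one (by linarith) (by linarith) (by linarith))

/-- For `N ≥ 3` and `0 < α < N−1` one has `|g_α(r)| ≤ 1` for every `0 < r < 1`. -/
theorem gAlpha_abs_le_one (N : ℕ) (hN : 3 ≤ N) (α : ℝ) (hα : 0 < α)
    (hαN : α < (N : ℝ) - 1) (r : ℝ) (hr0 : 0 < r) (hr1 : r < 1) :
    |gAlpha N α r| ≤ 1 :=
  gAlpha_abs_le_one_general N hN α hα hαN r hr0
end

section
/- Let N ≥ 3 be an integer, 0 < α < N−1, and let f_α(x) = (N−1) g_α(|x|)/|x| on the punctured unit ball B₁(0)∖{0} of ℝ^N. Then sup_{t>0} t · (Lebesgue measure of {x ∈ B₁(0) : x ≠ 0 and |f_α(x)| > t})^{1/N} = (N−1) ω_N^{1/N}, where ω_N is the Lebesgue volume of the unit ball of ℝ^N. -/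
open MeasureTheory

/-- The datum `f_α(x) = (N−1) g_α(|x|)/|x|` of the extremal example. -/
noncomputable def fAlpha (N : ℕ) (α : ℝ) (x : EuclideanSpace ℝ (Fin N)) : ℝ :=
  ((N : ℝ) - 1) * gAlpha N α ‖x‖ / ‖x‖

lemma abs_le_of_sq_le' {n D : ℝ} (hD : 0 < D) (h : n^2 ≤ D^2) : |n| ≤ D := by
  nlinarith [sq_abs n, abs_nonneg n]

lemma le_of_sq_le' {n D : ℝ} (hD : 0 ≤ D) (hn : 0 ≤ n) (h : n^2 ≤ D^2) : n ≤ D := by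
  nlinarith

lemma pow32_sq {x : ℝ} (hx : 0 ≤ x) : (x ^ ((3:ℝ)/2)) ^ 2 = x ^ 3 := by
  rw [← Real.rpow_natCast (x ^ ((3:ℝ)/2)) 2, ← Real.rpow_mul hx, ← Real.rpow_natCast x 3]
  norm_num

lemma phi_abs_le {s c : ℝ} (hs : 0 < s) (hc1 : -1 < c) (hc2 : c < 1) :
    |s * (s^2 - c)| ≤ (1 + s^2) ^ ((3:ℝ)/2) := by
  have hb : (0:ℝ) ≤ 1 + s^2 := by positivity
  have hD : 0 < (1 + s^2) ^ ((3:ℝ)/2) := Real.rpow_pos_of_pos (by positivity) _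
  refine abs_le_of_sq_le' hD ?_
  rw [pow32_sq hb]
  nlinarith [mul_nonneg (by linarith : (0:ℝ) ≤ 1 + c) (pow_nonneg hs.le 4),
    mul_nonneg (mul_nonneg (by linarith : (0:ℝ) ≤ 1 - c) (by linarith : (0:ℝ) ≤ 1 + c)) (sq_nonneg s),
    sq_nonneg s, pow_nonneg hs.le 4]

lemma phi_ge {s c θ : ℝ} (hs1 : 1 ≤ s) (hs10 : 10 ≤ (1 - θ^2) * s^2)
    (hθ0 : 0 < θ) (hθ1 : θ < 1) (hc1 : -1 < c) (hc2 : c < 1) :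
    θ * (1 + s^2) ^ ((3:ℝ)/2) ≤ s * (s^2 - c) := by
  have hs : 0 < s := lt_of_lt_of_le one_pos hs1
  have hb : (0:ℝ) ≤ 1 + s^2 := by positivity
  have hD : 0 < (1 + s^2) ^ ((3:ℝ)/2) := Real.rpow_pos_of_pos (by positivity) _
  have hn : 0 ≤ s * (s^2 - c) := by nlinarith
  refine le_of_sq_le' hn (by positivity) ?_
  rw [mul_pow, pow32_sq hb]
  have key : 10 * s^2 ≤ ((1 - θ^2) * s^2) * s^2 :=
    mul_le_mul_of_nonneg_right hs10 (sq_nonneg s)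
  have key2 := mul_le_mul_of_nonneg_right key (sq_nonneg s)
  have hu : 1 ≤ s^2 := by nlinarith
  have hθsq : θ^2 < 1 := by nlinarith
  nlinarith [mul_nonneg (by nlinarith : (0:ℝ) ≤ 1 - θ^2) (mul_nonneg (sq_nonneg s) (sq_nonneg s)),
    mul_nonneg (by linarith : (0:ℝ) ≤ 1 - c) (mul_nonneg (sq_nonneg s) (sq_nonneg s)),
    mul_nonneg (sq_nonneg c) (sq_nonneg s),
    mul_nonneg (by nlinarith : (0:ℝ) ≤ s^2 - 1) (sq_nonneg s),
    mul_nonneg (by nlinarith : (0:ℝ) ≤ 1 - θ^2) (sq_nonneg s)]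

lemma gAlpha_eq (N : ℕ) {α r : ℝ} (hr : 0 < r) :
    gAlpha N α r = (α * r ^ (-α - 1)) * ((α * r ^ (-α - 1))^2 - (α + 2 - N) / ((N:ℝ) - 1)) /
      (1 + (α * r ^ (-α - 1))^2) ^ ((3:ℝ)/2) := by
  have h2 : α ^ 2 * r ^ (-2*α - 2) = (α * r ^ (-α - 1))^2 := by
    rw [mul_pow, ← Real.rpow_natCast (r ^ (-α - 1)) 2, ← Real.rpow_mul hr.le,
      show ((-α - 1) * ((2:ℕ):ℝ)) = -2*α - 2 by push_cast; ring]
  unfold gAlpha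
  rw [h2]

lemma c_bounds (N : ℕ) (hN : 3 ≤ N) {α : ℝ} (hα : 0 < α) (hαN : α < (N:ℝ) - 1) :
    -1 < (α + 2 - N) / ((N:ℝ) - 1) ∧ (α + 2 - N) / ((N:ℝ) - 1) < 1 := by
  have hN3 : (3:ℝ) ≤ N := by exact_mod_cast hN
  have hN1 : (0:ℝ) < (N:ℝ) - 1 := by linarith
  constructor
  · rw [show (-1:ℝ) = -((N:ℝ)-1)/((N:ℝ)-1) by field_simp, div_lt_div_iff_of_pos_right hN1]
    linarith
  · rw [div_lt_one hN1]; linarith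

lemma gAlpha_abs_le (N : ℕ) (hN : 3 ≤ N) {α r : ℝ} (hα : 0 < α) (hαN : α < (N:ℝ) - 1)
    (hr : 0 < r) : |gAlpha N α r| ≤ 1 := by
  obtain ⟨hc1, hc2⟩ := c_bounds N hN hα hαN
  have hs : 0 < α * r ^ (-α - 1) := mul_pos hα (Real.rpow_pos_of_pos hr _)
  have hD : 0 < (1 + (α * r ^ (-α - 1))^2) ^ ((3:ℝ)/2) :=
    Real.rpow_pos_of_pos (by positivity) _
  rw [gAlpha_eq N hr, abs_div, abs_of_pos hD, div_le_one hD]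
  exact phi_abs_le hs hc1 hc2

lemma exists_r0 (N : ℕ) (hN : 3 ≤ N) {α : ℝ} (hα : 0 < α) (hαN : α < (N:ℝ) - 1)
    {θ : ℝ} (hθ0 : 0 < θ) (hθ1 : θ < 1) :
    ∃ r₀ : ℝ, 0 < r₀ ∧ r₀ < 1 ∧ ∀ r, 0 < r → r < r₀ → θ ≤ gAlpha N α r := by
  obtain ⟨hc1, hc2⟩ := c_bounds N hN hα hαN
  have hsθ : 0 < 1 - θ^2 := by nlinarith
  set s₁ : ℝ := max 1 (Real.sqrt (10 / (1 - θ^2))) with hs₁def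
  have hs₁ : 1 ≤ s₁ := le_max_left _ _
  have hs₁pos : 0 < s₁ := lt_of_lt_of_le one_pos hs₁
  have hexp : 0 < α + 1 := by linarith
  set ρ : ℝ := (α / s₁) ^ ((1:ℝ)/(α+1)) with hρdef
  have hρpos : 0 < ρ := Real.rpow_pos_of_pos (div_pos hα hs₁pos) _
  refine ⟨min (1/2) ρ, lt_min (by norm_num) hρpos,
    lt_of_le_of_lt (min_le_left _ _) (by norm_num), ?_⟩
  intro r hr hrlt
  have hrρ : r < ρ := lt_of_lt_of_le hrlt (min_le_right _ _)
  have h1 : r ^ (α+1) < ρ ^ (α+1) := Real.rpow_lt_rpow hr.le hrρ hexp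
  have h2 : ρ ^ (α+1) = α / s₁ := by
    rw [hρdef, ← Real.rpow_mul (le_of_lt (div_pos hα hs₁pos)), one_div,
      inv_mul_cancel₀ (ne_of_gt hexp), Real.rpow_one]
  have hrp : 0 < r ^ (α+1) := Real.rpow_pos_of_pos hr _
  have hs_eq : α * r ^ (-α - 1) = α / r ^ (α+1) := by
    rw [show (-α - 1 : ℝ) = -(α+1) by ring, Real.rpow_neg hr.le, div_eq_mul_inv]
  set s : ℝ := α * r ^ (-α - 1) with hsdef
  have hs_gt : s₁ < s := by
    rw [hs_eq, lt_div_iff₀ hrp]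
    calc s₁ * r ^ (α+1) < s₁ * (α / s₁) :=
          mul_lt_mul_of_pos_left (h2 ▸ h1) hs₁pos
      _ = α := by field_simp
  have hs1' : 1 ≤ s := le_of_lt (lt_of_le_of_lt hs₁ hs_gt)
  have hsqrt : Real.sqrt (10 / (1 - θ^2)) ≤ s := le_of_lt (lt_of_le_of_lt (le_max_right _ _) hs_gt)
  have hs10 : 10 ≤ (1 - θ^2) * s^2 := by
    have h10 : (0:ℝ) ≤ 10 / (1 - θ^2) := by positivity
    have := Real.sq_sqrt h10
    have hsq2 : 10 / (1 - θ^2) ≤ s^2 := by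
      rw [← this]
      exact pow_le_pow_left₀ (Real.sqrt_nonneg _) hsqrt 2
    rw [div_le_iff₀ hsθ] at hsq2
    linarith [hsq2]
  have hD : 0 < (1 + s^2) ^ ((3:ℝ)/2) := Real.rpow_pos_of_pos (by positivity) _
  rw [gAlpha_eq N hr, ← hsdef, le_div_iff₀ hD]
  exact phi_ge hs1' hs10 hθ0 hθ1 hc1 hc2

/-- For `N ≥ 3` and `0 < α < N−1`, the Marcinkiewicz (weak-`L^N`) quasinorm of
`f_α` on the unit ball equals `(N−1) ω_N^{1/N}`, where `ω_N` is the volume of the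
unit ball of `ℝ^N`. -/
theorem fAlpha_weak_LN_norm (N : ℕ) (hN : 3 ≤ N) (α : ℝ) (hα : 0 < α)
    (hαN : α < (N : ℝ) - 1) :
    sSup {y : ℝ | ∃ t : ℝ, 0 < t ∧
        y = t * (volume {x : EuclideanSpace ℝ (Fin N) |
          x ∈ Metric.ball (0 : EuclideanSpace ℝ (Fin N)) 1 ∧ x ≠ 0 ∧
            t < |fAlpha N α x|}).toReal ^ ((1 : ℝ) / N)} =
      ((N : ℝ) - 1) *
        (volume (Metric.ball (0 : EuclideanSpace ℝ (Fin N)) 1)).toReal ^ ((1 : ℝ) / N) := by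
  have hN3 : (3:ℝ) ≤ N := by exact_mod_cast hN
  have hN1 : (0:ℝ) < (N:ℝ) - 1 := by linarith
  have hNne : (N:ℝ) ≠ 0 := by positivity
  haveI : Nontrivial (EuclideanSpace ℝ (Fin N)) :=
    nontrivial_of_ne (EuclideanSpace.single ⟨0, by omega⟩ (1:ℝ)) 0 (by
      intro h
      have := congrArg (fun v : EuclideanSpace ℝ (Fin N) => v ⟨0, by omega⟩) h
      simp [EuclideanSpace.single] at this)
  set ω : ℝ := (volume (Metric.ball (0 : EuclideanSpace ℝ (Fin N)) 1)).toReal with hωdef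
  have hω : 0 < ω :=
    ENNReal.toReal_pos (Metric.measure_ball_pos _ _ one_pos).ne' measure_ball_lt_top.ne
  set R : ℝ := ((N:ℝ) - 1) * ω ^ ((1:ℝ)/N) with hRdef
  have hR0 : 0 < R := by
    have := Real.rpow_pos_of_pos hω ((1:ℝ)/N)
    positivity
  set A : ℝ → Set (EuclideanSpace ℝ (Fin N)) := fun t =>
    {x : EuclideanSpace ℝ (Fin N) |
      x ∈ Metric.ball (0 : EuclideanSpace ℝ (Fin N)) 1 ∧ x ≠ 0 ∧ t < |fAlpha N α x|} with hAdef
  set S : Set ℝ := {y : ℝ | ∃ t : ℝ, 0 < t ∧ y = t * (volume (A t)).toReal ^ ((1:ℝ)/N)}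
    with hSdef
  have hball : ∀ ρ : ℝ, 0 ≤ ρ →
      (volume (Metric.ball (0 : EuclideanSpace ℝ (Fin N)) ρ)).toReal = ρ^N * ω := by
    intro ρ hρ
    rw [hωdef, Measure.addHaar_ball _ _ hρ, finrank_euclideanSpace_fin, ENNReal.toReal_mul,
      ENNReal.toReal_ofReal (pow_nonneg hρ N)]
  have hrn : ∀ x : ℝ, 0 ≤ x → (x ^ N * ω) ^ ((1:ℝ)/N) = x * ω ^ ((1:ℝ)/N) := by
    intro x hx
    rw [Real.mul_rpow (pow_nonneg hx N) hω.le, ← Real.rpow_natCast x N, ← Real.rpow_mul hx,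
      mul_one_div, div_self hNne, Real.rpow_one]
  have hAsub1 : ∀ t : ℝ, A t ⊆ Metric.ball (0 : EuclideanSpace ℝ (Fin N)) 1 :=
    fun t x hx => hx.1
  have hAfin : ∀ t : ℝ, volume (A t) ≠ ⊤ :=
    fun t => (lt_of_le_of_lt (measure_mono (hAsub1 t)) measure_ball_lt_top).ne
  -- upper bound
  have hub : ∀ y ∈ S, y ≤ R := by
    rintro y ⟨t, ht, rfl⟩
    set m : ℝ := min 1 (((N:ℝ) - 1)/t) with hmdef
    have hm : 0 < m := lt_min one_pos (div_pos hN1 ht)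
    have hsub : A t ⊆ Metric.ball (0 : EuclideanSpace ℝ (Fin N)) m := by
      rintro x ⟨hx1, hx0, hxt⟩
      have hxn : 0 < ‖x‖ := norm_pos_iff.mpr hx0
      have hg := gAlpha_abs_le N hN hα hαN hxn
      have hf : |fAlpha N α x| ≤ ((N:ℝ) - 1)/‖x‖ := by
        unfold fAlpha
        rw [abs_div, abs_mul, abs_of_pos hN1, abs_of_pos hxn]
        apply div_le_div_of_nonneg_right ?_ hxn.le |>.trans_eq rfl
        · exact (mul_le_mul_of_nonneg_left hg hN1.le).trans (by rw [mul_one])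
      have h3 : t * ‖x‖ < (N:ℝ) - 1 := (lt_div_iff₀ hxn).mp (lt_of_lt_of_le hxt hf)
      have hx2 : ‖x‖ < ((N:ℝ) - 1)/t := (lt_div_iff₀ ht).mpr (by linarith [h3])
      exact mem_ball_zero_iff.mpr (lt_min (mem_ball_zero_iff.mp hx1) hx2)
    have hV : (volume (A t)).toReal ≤ m^N * ω := by
      rw [← hball m hm.le]
      exact ENNReal.toReal_mono measure_ball_lt_top.ne (measure_mono hsub)
    have htm : t * m ≤ (N:ℝ) - 1 := by
      calc t * m ≤ t * (((N:ℝ) - 1)/t) :=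
            mul_le_mul_of_nonneg_left (min_le_right _ _) ht.le
        _ = (N:ℝ) - 1 := by field_simp
    calc t * (volume (A t)).toReal ^ ((1:ℝ)/N)
        ≤ t * (m^N * ω) ^ ((1:ℝ)/N) :=
          mul_le_mul_of_nonneg_left
            (Real.rpow_le_rpow ENNReal.toReal_nonneg hV (by positivity)) ht.le
      _ = (t * m) * ω ^ ((1:ℝ)/N) := by rw [hrn m hm.le]; ring
      _ ≤ R := by
          rw [hRdef]
          exact mul_le_mul_of_nonneg_right htm (Real.rpow_nonneg hω.le _)
  have hbdd : BddAbove S := ⟨R, hub⟩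
  refine le_antisymm (Real.sSup_le hub hR0.le) ?_
  -- lower bound
  have hθstep : ∀ θ : ℝ, 0 < θ → θ < 1 → θ * R ≤ sSup S := by
    intro θ hθ0 hθ1
    obtain ⟨r₀, hr₀0, hr₀1, hg⟩ := exists_r0 N hN hα hαN hθ0 hθ1
    set t : ℝ := ((N:ℝ) - 1) * θ / r₀ with htdef
    have ht : 0 < t := by positivity
    have htr : t * r₀ = ((N:ℝ) - 1) * θ := by
      rw [htdef]; field_simp
    have hsub : (Metric.ball (0 : EuclideanSpace ℝ (Fin N)) r₀ \ {0}) ⊆ A t := by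
      rintro x ⟨hx1, hx0⟩
      have hx0' : x ≠ 0 := hx0
      have hxn : 0 < ‖x‖ := norm_pos_iff.mpr hx0'
      have hxr : ‖x‖ < r₀ := mem_ball_zero_iff.mp hx1
      have hgx : θ ≤ gAlpha N α ‖x‖ := hg ‖x‖ hxn hxr
      refine ⟨mem_ball_zero_iff.mpr (lt_trans hxr hr₀1), hx0', ?_⟩
      have h1 : ((N:ℝ) - 1) * θ / ‖x‖ ≤ fAlpha N α x := by
        unfold fAlpha
        exact div_le_div_of_nonneg_right
          (mul_le_mul_of_nonneg_left hgx hN1.le) hxn.le |>.trans_eq rfl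
      have h2 : t < ((N:ℝ) - 1) * θ / ‖x‖ := by
        rw [lt_div_iff₀ hxn, ← htr]
        exact mul_lt_mul_of_pos_left hxr ht
      exact lt_of_lt_of_le (lt_of_lt_of_le h2 h1) (le_abs_self _)
    have hVA : r₀^N * ω ≤ (volume (A t)).toReal := by
      have hsing : volume ({0} : Set (EuclideanSpace ℝ (Fin N))) = 0 := measure_singleton 0
      have hdiff : volume (Metric.ball (0 : EuclideanSpace ℝ (Fin N)) r₀ \ {0}) =
          volume (Metric.ball (0 : EuclideanSpace ℝ (Fin N)) r₀) := measure_diff_null hsing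
      rw [← hball r₀ hr₀0.le, ← hdiff]
      exact ENNReal.toReal_mono (hAfin t) (measure_mono hsub)
    have hy : t * (volume (A t)).toReal ^ ((1:ℝ)/N) ∈ S := ⟨t, ht, rfl⟩
    have hle : θ * R ≤ t * (volume (A t)).toReal ^ ((1:ℝ)/N) := by
      have h4 : (r₀^N * ω) ^ ((1:ℝ)/N) ≤ (volume (A t)).toReal ^ ((1:ℝ)/N) :=
        Real.rpow_le_rpow (by positivity) hVA (by positivity)
      calc θ * R = t * (r₀ * ω ^ ((1:ℝ)/N)) := by rw [hRdef, ← mul_assoc, mul_comm θ, ← htr]; ring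
        _ = t * (r₀^N * ω) ^ ((1:ℝ)/N) := by rw [hrn r₀ hr₀0.le]
        _ ≤ t * (volume (A t)).toReal ^ ((1:ℝ)/N) :=
            mul_le_mul_of_nonneg_left h4 ht.le
    exact hle.trans (le_csSup hbdd hy)
  by_contra h
  push_neg at h
  have hhalf := hθstep (1/2) (by norm_num) (by norm_num)
  have hSpos : 0 < sSup S := lt_of_lt_of_le (by linarith) hhalf
  set θ : ℝ := (sSup S / R + 1)/2 with hθdef
  have hθ0 : 0 < θ := by
    have : 0 < sSup S / R := div_pos hSpos hR0
    rw [hθdef]; linarith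
  have hθ1 : θ < 1 := by
    have : sSup S / R < 1 := (div_lt_one hR0).mpr h
    rw [hθdef]; linarith
  have hstep := hθstep θ hθ0 hθ1
  have hθR : θ * R = (sSup S + R)/2 := by
    rw [hθdef]; field_simp
  rw [hθR] at hstep
  linarith
end
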